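/- arXiv:0908.0455 — 4 statements merged into one kernel-verified Lean document; each statement's English description precedes it below -/
import Mathlib

section
/- Let (α, ω_A) and (β, ω_B) be Busby–Smith twisted actions of G on unital C*-algebras A and B. If (f, V) is a transformation from (α, ω_A) to (β, ω_B), i.e. f : A → B is a unital *-homomorphism and V_g ∈ U(B) satisfy V_g β_g(f(a)) V_g* = f(α_g(a)) and V_{g₁} β_{g₁}(V_{g₂}) ω_B(g₁,g₂)* = f(ω_A(g₁,g₂)*) V_{g₁g₂}, then (f, V) decomposes as a strictly equivariant map followed by an exterior equivalence: the maps β'_g := Ad_{V_g} ∘ β_g with ω'_B(g₁,g₂) := V_{g₁g₂} ω_B(g₁,g₂) β_{g₁}(V_{g₂})* V_{g₁}* form a twisted action, f satisfies f ∘ α_g = β'_g ∘ f and f(ω_A(g₁,g₂)) = ω'_B(g₁,g₂), and (V_g) is an exterior equivalence from (β', ω'_B) to (β, ω_B). -/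
/-!
Since `V` intertwines `β ∘ f` with `f ∘ α`, the perturbed cocycle
`ω'_B(g₁,g₂) = V_{g₁g₂} ω_B(g₁,g₂) β_{g₁}(V_{g₂})* V_{g₁}*` is exactly `f(ω_A(g₁,g₂))`, and
`f ∘ α_g = β'_g ∘ f`. The cocycle identity for `(β', ω'_B)` is therefore the image under `f`
of the one for `(α, ω_A)`, and `ω'_B` is unitary as the image of a unitary. The covariance
relation `Ad ω'_B(g₁,g₂) ∘ β'_{g₁} ∘ β'_{g₂} = β'_{g₁g₂}` holds on all of `B`, not only on the
image of `f`: it follows from the one for `(β, ω_B)` because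
`ω'_B(g₁,g₂) V_{g₁} β_{g₁}(V_{g₂}) = V_{g₁g₂} ω_B(g₁,g₂)`.
-/

def IsTwistedCocycle {G A : Type*} [Mul G] [Mul A] [Star A]
    (α : G → A → A) (ω : G → G → A) : Prop :=
  ∀ g₁ g₂ g₃ : G,
    α g₁ (star (ω g₂ g₃)) * star (ω g₁ (g₂ * g₃)) = star (ω g₁ g₂) * star (ω (g₁ * g₂) g₃)

theorem IsTwistedCocycle.map {G A B F : Type*} [Mul G] [Monoid A] [StarMul A] [Monoid B]
    [StarMul B] [FunLike F A B] [MonoidHomClass F A B] [StarHomClass F A B]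
    {α : G → A → A} {ω : G → G → A} (hω : IsTwistedCocycle α ω)
    (f : F) {β : G → B → B} (hf : ∀ g a, f (α g a) = β g (f a)) :
    IsTwistedCocycle β fun g₁ g₂ => f (ω g₁ g₂) := by
  intro g₁ g₂ g₃
  simp only [← map_star, ← hf, ← map_mul, hω g₁ g₂ g₃]

section ExteriorPerturbation

variable {G B F : Type*} [Mul G] [Monoid B] [StarMul B] [FunLike F B B]
  (β : G → F) (ω : G → G → B) (V : G → unitary B)

def exteriorAction (g : G) (b : B) : B :=
  V g * β g b * star (V g : B)

def exteriorCocycle (g₁ g₂ : G) : B :=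
  V (g₁ * g₂) * ω g₁ g₂ * star (β g₁ (V g₂)) * star (V g₁ : B)

theorem star_exteriorCocycle (g₁ g₂ : G) :
    star (exteriorCocycle β ω V g₁ g₂)
      = V g₁ * β g₁ (V g₂) * star (ω g₁ g₂) * star (V (g₁ * g₂) : B) := by
  simp only [exteriorCocycle, star_mul, star_star, mul_assoc]

theorem exteriorCocycle_eq_of_mul_star_eq {g₁ g₂ : G} {y : B}
    (h : V g₁ * β g₁ (V g₂) * star (ω g₁ g₂) = star y * V (g₁ * g₂)) :
    exteriorCocycle β ω V g₁ g₂ = y := by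
  apply star_injective
  rw [star_exteriorCocycle, h, mul_assoc, Unitary.mul_star_self_of_mem (V _).prop, mul_one]

variable [MonoidHomClass F B B] [StarHomClass F B B]

theorem mul_map_conj_mul_star (φ : F) (u v b : B) :
    u * φ (v * b * star v) * star u = (u * φ v) * φ b * star (u * φ v) := by
  simp only [map_mul, map_star, star_mul, mul_assoc]

theorem exteriorCocycle_mul (g₁ g₂ : G) :
    exteriorCocycle β ω V g₁ g₂ * (V g₁ * β g₁ (V g₂)) = V (g₁ * g₂) * ω g₁ g₂ := by
  have hV : star (V g₁ : B) * V g₁ = 1 := Unitary.star_mul_self_of_mem (V g₁).prop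
  have hβV : star (β g₁ (V g₂)) * β g₁ (V g₂) = 1 :=
    Unitary.star_mul_self_of_mem (Unitary.map_mem (β g₁) (V g₂).prop)
  simp only [exteriorCocycle, mul_assoc]
  rw [← mul_assoc (star (V g₁ : B)), hV, one_mul, hβV, mul_one]

theorem exteriorCocycle_conj_exteriorAction
    (hω : ∀ g₁ g₂ b, ω g₁ g₂ * β g₁ (β g₂ b) * star (ω g₁ g₂) = β (g₁ * g₂) b)
    (g₁ g₂ : G) (b : B) :
    exteriorCocycle β ω V g₁ g₂ * exteriorAction β V g₁ (exteriorAction β V g₂ b)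
        * star (exteriorCocycle β ω V g₁ g₂)
      = exteriorAction β V (g₁ * g₂) b := by
  calc exteriorCocycle β ω V g₁ g₂ * exteriorAction β V g₁ (exteriorAction β V g₂ b)
        * star (exteriorCocycle β ω V g₁ g₂)
      = (exteriorCocycle β ω V g₁ g₂ * (V g₁ * β g₁ (V g₂))) * β g₁ (β g₂ b)
          * star (exteriorCocycle β ω V g₁ g₂ * (V g₁ * β g₁ (V g₂))) := by
        rw [exteriorAction, exteriorAction, mul_map_conj_mul_star, star_mul _ (_ * _)]
        simp only [mul_assoc]
    _ = V (g₁ * g₂) * (ω g₁ g₂ * β g₁ (β g₂ b) * star (ω g₁ g₂)) * star (V (g₁ * g₂) : B) := by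
        rw [exteriorCocycle_mul, star_mul]
        simp only [mul_assoc]
    _ = exteriorAction β V (g₁ * g₂) b := by
        rw [hω, exteriorAction]

end ExteriorPerturbation

theorem statement6_general
    {G : Type*} [Group G] {A B : Type*} [CStarAlgebra A] [CStarAlgebra B]
    (α : G → (A ≃⋆ₐ[ℂ] A)) (ωA : G → G → unitary A)
    (hcocycleA : ∀ g₁ g₂ g₃ : G,
      α g₁ (star (ωA g₂ g₃ : A)) * star (ωA g₁ (g₂ * g₃) : A)
        = star (ωA g₁ g₂ : A) * star (ωA (g₁ * g₂) g₃ : A))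
    (β : G → (B ≃⋆ₐ[ℂ] B)) (ωB : G → G → unitary B)
    (hωB : ∀ g₁ g₂ : G, ∀ b : B,
      (ωB g₁ g₂ : B) * β g₁ (β g₂ b) * star (ωB g₁ g₂ : B) = β (g₁ * g₂) b)
    -- the transformation `(f, V)`:
    (f : A →⋆ₐ[ℂ] B) (V : G → unitary B)
    (htrans₁ : ∀ g : G, ∀ a : A,
      (V g : B) * β g (f a) * star (V g : B) = f (α g a))
    (htrans₂ : ∀ g₁ g₂ : G,
      (V g₁ : B) * β g₁ (V g₂ : B) * star (ωB g₁ g₂ : B)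
        = f (star (ωA g₁ g₂ : A)) * (V (g₁ * g₂) : B))
    -- the intermediate twisted action `(β', ω'_B)`:
    (β' : G → B → B)
    (hβ' : ∀ g b, β' g b = (V g : B) * β g b * star (V g : B))
    (ω'B : G → G → B)
    (hω'B : ∀ g₁ g₂, ω'B g₁ g₂ = (V (g₁ * g₂) : B) * (ωB g₁ g₂ : B)
        * star (β g₁ (V g₂ : B)) * star (V g₁ : B)) :
    -- (i) `(β', ω'_B)` is a twisted action:
    ((∀ g₁ g₂ : G, ω'B g₁ g₂ ∈ unitary B) ∧
     (∀ g₁ g₂ : G, ∀ b : B,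
        ω'B g₁ g₂ * β' g₁ (β' g₂ b) * star (ω'B g₁ g₂) = β' (g₁ * g₂) b) ∧
     (∀ g₁ g₂ g₃ : G,
        β' g₁ (star (ω'B g₂ g₃)) * star (ω'B g₁ (g₂ * g₃))
          = star (ω'B g₁ g₂) * star (ω'B (g₁ * g₂) g₃))) ∧
    -- (ii) `f` is strictly equivariant from `(α, ω_A)` to `(β', ω'_B)`:
    ((∀ g : G, ∀ a : A, f (α g a) = β' g (f a)) ∧
     (∀ g₁ g₂ : G, f (ωA g₁ g₂ : A) = ω'B g₁ g₂)) ∧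
    -- (iii) `(V_g)` is an exterior equivalence from `(β', ω'_B)` to `(β, ω_B)`:
    ((∀ g : G, ∀ b : B, β' g b = (V g : B) * β g b * star (V g : B)) ∧
     (∀ g₁ g₂ : G, star (ω'B g₁ g₂)
        = (V g₁ : B) * β g₁ (V g₂ : B) * star (ωB g₁ g₂ : B)
            * star (V (g₁ * g₂) : B))) := by
  obtain rfl : β' = exteriorAction β V := funext fun g => funext (hβ' g)
  obtain rfl : ω'B = exteriorCocycle β (fun g₁ g₂ => (ωB g₁ g₂ : B)) V :=
    funext fun g₁ => funext (hω'B g₁)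
  have hfα : ∀ g a, f (α g a) = exteriorAction β V g (f a) := fun g a => (htrans₁ g a).symm
  have hω'B_eq : exteriorCocycle β (fun g₁ g₂ => (ωB g₁ g₂ : B)) V = fun g₁ g₂ => f (ωA g₁ g₂) :=
    funext fun g₁ => funext fun g₂ =>
      exteriorCocycle_eq_of_mul_star_eq β _ V (by rw [htrans₂, map_star])
  refine ⟨⟨?_, exteriorCocycle_conj_exteriorAction β _ V hωB, ?_⟩,
    ⟨hfα, fun g₁ g₂ => by rw [hω'B_eq]⟩, ⟨hβ', star_exteriorCocycle β _ V⟩⟩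
  · intro g₁ g₂
    rw [hω'B_eq]
    exact Unitary.map_mem f (ωA g₁ g₂).prop
  · rw [hω'B_eq]
    exact IsTwistedCocycle.map hcocycleA f hfα

theorem statement6
    {G : Type*} [Group G] {A B : Type*} [CStarAlgebra A] [CStarAlgebra B]
    (α : G → (A ≃⋆ₐ[ℂ] A)) (ωA : G → G → unitary A)
    (hωA : ∀ g₁ g₂ : G, ∀ a : A,
      (ωA g₁ g₂ : A) * α g₁ (α g₂ a) * star (ωA g₁ g₂ : A) = α (g₁ * g₂) a)
    (hcocycleA : ∀ g₁ g₂ g₃ : G,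
      α g₁ (star (ωA g₂ g₃ : A)) * star (ωA g₁ (g₂ * g₃) : A)
        = star (ωA g₁ g₂ : A) * star (ωA (g₁ * g₂) g₃ : A))
    (β : G → (B ≃⋆ₐ[ℂ] B)) (ωB : G → G → unitary B)
    (hωB : ∀ g₁ g₂ : G, ∀ b : B,
      (ωB g₁ g₂ : B) * β g₁ (β g₂ b) * star (ωB g₁ g₂ : B) = β (g₁ * g₂) b)
    (hcocycleB : ∀ g₁ g₂ g₃ : G,
      β g₁ (star (ωB g₂ g₃ : B)) * star (ωB g₁ (g₂ * g₃) : B)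
        = star (ωB g₁ g₂ : B) * star (ωB (g₁ * g₂) g₃ : B))
    -- the transformation `(f, V)`:
    (f : A →⋆ₐ[ℂ] B) (V : G → unitary B)
    (htrans₁ : ∀ g : G, ∀ a : A,
      (V g : B) * β g (f a) * star (V g : B) = f (α g a))
    (htrans₂ : ∀ g₁ g₂ : G,
      (V g₁ : B) * β g₁ (V g₂ : B) * star (ωB g₁ g₂ : B)
        = f (star (ωA g₁ g₂ : A)) * (V (g₁ * g₂) : B))
    -- the intermediate twisted action `(β', ω'_B)`:
    (β' : G → B → B)
    (hβ' : ∀ g b, β' g b = (V g : B) * β g b * star (V g : B))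
    (ω'B : G → G → B)
    (hω'B : ∀ g₁ g₂, ω'B g₁ g₂ = (V (g₁ * g₂) : B) * (ωB g₁ g₂ : B)
        * star (β g₁ (V g₂ : B)) * star (V g₁ : B)) :
    -- (i) `(β', ω'_B)` is a twisted action:
    ((∀ g₁ g₂ : G, ω'B g₁ g₂ ∈ unitary B) ∧
     (∀ g₁ g₂ : G, ∀ b : B,
        ω'B g₁ g₂ * β' g₁ (β' g₂ b) * star (ω'B g₁ g₂) = β' (g₁ * g₂) b) ∧
     (∀ g₁ g₂ g₃ : G,
        β' g₁ (star (ω'B g₂ g₃)) * star (ω'B g₁ (g₂ * g₃))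
          = star (ω'B g₁ g₂) * star (ω'B (g₁ * g₂) g₃))) ∧
    -- (ii) `f` is strictly equivariant from `(α, ω_A)` to `(β', ω'_B)`:
    ((∀ g : G, ∀ a : A, f (α g a) = β' g (f a)) ∧
     (∀ g₁ g₂ : G, f (ωA g₁ g₂ : A) = ω'B g₁ g₂)) ∧
    -- (iii) `(V_g)` is an exterior equivalence from `(β', ω'_B)` to `(β, ω_B)`:
    ((∀ g : G, ∀ b : B, β' g b = (V g : B) * β g b * star (V g : B)) ∧
     (∀ g₁ g₂ : G, star (ω'B g₁ g₂)
        = (V g₁ : B) * β g₁ (V g₂ : B) * star (ωB g₁ g₂ : B)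
            * star (V (g₁ * g₂) : B))) :=
  statement6_general α ωA hcocycleA β ωB hωB f V htrans₁ htrans₂ β' hβ' ω'B hω'B
end

section
/- A strictly continuous unital *-homomorphism f : M(A) → M(B) between multiplier algebras of C*-algebras A and B is an equivalence in the 2-category of C*-algebras with *-representations as arrows and unitary intertwiners as 2-morphisms if and only if f restricts to a C*-algebra isomorphism A → B. In particular, if there exists a strictly continuous unital *-homomorphism g : M(B) → M(A) and unitaries u ∈ M(B), v ∈ M(A) with f ∘ g = Ad_u and g ∘ f = Ad_v, then f(A) = B and f|_A : A → B is a *-isomorphism. -/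
open scoped MultiplierAlgebra

/-!
Strict continuity of `g` together with `g 1 = 1` gives `g e → 1` strictly along an approximate
unit `e` of `B`, hence `g e * a → a` in norm for every `a ∈ A`. Each `f (g e * a) = u e u⋆ f a`
lies in `B`, an ideal of `M(B)`, and `B` is norm closed in `M(B)`, so `f a ∈ B`; symmetrically
`g` maps `B` into `A`. The restriction of `f` is then injective because `g ∘ f = Ad_v` is, and
surjective because `b = f (g (u⋆ b u))`. Conversely, a unital homomorphism `M(A) → M(B)` that
extends an isomorphism `φ : A ≃ B` must be the conjugation `m ↦ φ ∘ m ∘ φ⁻¹`, which is invertible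
and strictly continuous.
-/

/-- The strict topology on the multiplier algebra `𝓜(ℂ, A)`: the topology
generated by the maps `m ↦ (m·a, a·m)` for `a ∈ A`. -/
noncomputable def strictTopology (A : Type*) [NonUnitalCStarAlgebra A] :
    TopologicalSpace 𝓜(ℂ, A) :=
  ⨅ a : A, TopologicalSpace.induced
    (fun m : 𝓜(ℂ, A) => (m.fst a, m.snd a)) inferInstance

/-- A map between multiplier algebras is strictly continuous if it is
continuous for the strict topologies. -/
def StrictlyContinuous {A B : Type*} [NonUnitalCStarAlgebra A]
    [NonUnitalCStarAlgebra B] (f : 𝓜(ℂ, A) → 𝓜(ℂ, B)) : Prop :=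
  @Continuous _ _ (strictTopology A) (strictTopology B) f

open scoped CStarAlgebra
open Filter Topology

lemma CStarRing.eq_of_forall_mul_eq_mul {A : Type*} [NonUnitalNormedRing A] [StarRing A]
    [CStarRing A] {a b : A} (h : ∀ c, c * a = c * b) : a = b := by
  rw [← sub_eq_zero, ← CStarRing.star_mul_self_eq_zero_iff, mul_sub, h, sub_self]

theorem NonUnitalStarAlgHom.exists_lift_of_injective {R A B C : Type*} [Monoid R]
    [NonUnitalNonAssocSemiring A] [DistribMulAction R A] [Star A]
    [NonUnitalNonAssocSemiring B] [DistribMulAction R B] [Star B]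
    [NonUnitalNonAssocSemiring C] [DistribMulAction R C] [Star C]
    (ι : B →⋆ₙₐ[R] C) (hι : Function.Injective ι) (F : A →⋆ₙₐ[R] C)
    (hF : ∀ a, F a ∈ Set.range ι) : ∃ ψ : A →⋆ₙₐ[R] B, ∀ a, ι (ψ a) = F a := by
  choose ψ hψ using hF
  exact ⟨{ toFun := ψ
           map_smul' c a := hι (by simp [hψ])
           map_zero' := hι (by simp [hψ])
           map_add' a a' := hι (by simp [hψ])
           map_mul' a a' := hι (by simp [hψ])
           map_star' a := hι (by rw [hψ, map_star, map_star, hψ]) }, hψ⟩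

namespace DoubleCentralizer

variable {A B : Type*} [NonUnitalCStarAlgebra A] [NonUnitalCStarAlgebra B]

lemma fst_mul (m : 𝓜(ℂ, A)) (a b : A) : m.fst (a * b) = m.fst a * b :=
  CStarRing.eq_of_forall_mul_eq_mul fun c => by rw [← m.central, ← mul_assoc, m.central, mul_assoc]

lemma mul_coe (m : 𝓜(ℂ, A)) (a : A) : m * (a : 𝓜(ℂ, A)) = ↑(m.fst a) := by
  ext x : 3
  · simp [fst_mul]
  · simp [m.central]

lemma coe_star (a : A) : ((star a : A) : 𝓜(ℂ, A)) = star (a : 𝓜(ℂ, A)) :=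
  map_star (coeHom (𝕜 := ℂ) (A := A)) a

lemma coe_mul (m : 𝓜(ℂ, A)) (a : A) : (a : 𝓜(ℂ, A)) * m = ↑(m.snd a) := by
  have := congrArg star (mul_coe (star m) (star a))
  rwa [star_mul, star_star, star_fst, star_star, coe_star, coe_star, star_star, star_star] at this

lemma isometry_coe : Isometry ((↑) : A → 𝓜(ℂ, A)) :=
  AddMonoidHomClass.isometry_of_norm (coeHom (𝕜 := ℂ) (A := A)) fun a => by
    rw [coeHom_apply, ← norm_fst, coe_fst, ContinuousLinearMap.opNorm_mul_apply]

lemma coe_injective : Function.Injective ((↑) : A → 𝓜(ℂ, A)) :=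
  isometry_coe.injective

lemma isClosed_range_coe : IsClosed (Set.range ((↑) : A → 𝓜(ℂ, A))) :=
  isometry_coe.isClosedEmbedding.isClosed_range

lemma mul_coe_mul_mem_range_coe (m m' : 𝓜(ℂ, A)) (a : A) :
    m * a * m' ∈ Set.range ((↑) : A → 𝓜(ℂ, A)) :=
  ⟨m'.snd (m.fst a), by rw [mul_coe, coe_mul]⟩

lemma tendsto_strictTopology_iff {X : Type*} {l : Filter X} {F : X → 𝓜(ℂ, A)} {m : 𝓜(ℂ, A)} :
    Tendsto F l (@nhds _ (strictTopology A) m) ↔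
      ∀ a, Tendsto (fun x => ((F x).fst a, (F x).snd a)) l (𝓝 (m.fst a, m.snd a)) := by
  rw [strictTopology, nhds_iInf, tendsto_iInf]
  simp only [nhds_induced, tendsto_comap_iff]
  rfl

lemma continuous_apply_strictTopology (a : A) :
    @Continuous _ _ (strictTopology A) _ (fun m : 𝓜(ℂ, A) => (m.fst a, m.snd a)) :=
  continuous_iInf_dom continuous_induced_dom

lemma strictlyContinuous_iff {f : 𝓜(ℂ, A) → 𝓜(ℂ, B)} :
    StrictlyContinuous f ↔
      ∀ b, @Continuous _ _ (strictTopology A) _ (fun m => ((f m).fst b, (f m).snd b)) := by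
  unfold StrictlyContinuous strictTopology
  simp only [continuous_iInf_rng, continuous_induced_rng]
  rfl

lemma _root_.Filter.IsApproximateUnit.tendsto_coe_strictTopology {l : Filter A}
    (hl : l.IsApproximateUnit) : Tendsto ((↑) : A → 𝓜(ℂ, A)) l (@nhds _ (strictTopology A) 1) :=
  tendsto_strictTopology_iff.2 fun a => by
    simpa using (hl.tendsto_mul_right a).prodMk_nhds (hl.tendsto_mul_left a)

lemma _root_.CStarAlgebra.exists_isApproximateUnit (A : Type*) [NonUnitalCStarAlgebra A] :
    ∃ l : Filter A, l.IsApproximateUnit := by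
  let := CStarAlgebra.spectralOrder A
  let := CStarAlgebra.spectralOrderedRing A
  exact ⟨_, (CStarAlgebra.increasingApproximateUnit A).toIsApproximateUnit⟩

theorem apply_coe_mem_range_coe (f : 𝓜(ℂ, A) →⋆ₐ[ℂ] 𝓜(ℂ, B)) (g : 𝓜(ℂ, B) →⋆ₐ[ℂ] 𝓜(ℂ, A))
    (hg : StrictlyContinuous g) (hfg : ∀ b : B, f (g b) ∈ Set.range ((↑) : B → 𝓜(ℂ, B)))
    (a : A) : f a ∈ Set.range ((↑) : B → 𝓜(ℂ, B)) := by
  obtain ⟨l, hl⟩ := CStarAlgebra.exists_isApproximateUnit B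
  have := hl.neBot
  have hg_one : Tendsto (fun e : B => g e) l (@nhds _ (strictTopology A) 1) :=
    map_one g ▸ (@Continuous.tendsto _ _ (strictTopology B) (strictTopology A) _ hg 1).comp
      hl.tendsto_coe_strictTopology
  have hga : Tendsto (fun e : B => (g e).fst a) l (𝓝 a) := by
    simpa using (tendsto_strictTopology_iff.1 hg_one a).fst_nhds
  have hfga : Tendsto (fun e : B => f ↑((g e).fst a)) l (𝓝 (f a)) :=
    ((map_continuous f).comp isometry_coe.continuous).continuousAt.tendsto.comp hga
  refine isClosed_range_coe.mem_of_tendsto hfga (Eventually.of_forall fun e => ?_)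
  obtain ⟨b, hb⟩ := hfg e
  exact ⟨(f a).snd b, by rw [← coe_mul, hb, ← map_mul, mul_coe]⟩

section

variable (φ : A ≃⋆ₐ[ℂ] B)

noncomputable def _root_.StarAlgEquiv.toContinuousLinearMap : A →L[ℂ] B :=
  ⟨(φ : A →ₗ[ℂ] B), map_continuous φ⟩

@[simp] lemma _root_.StarAlgEquiv.coe_toContinuousLinearMap : ⇑φ.toContinuousLinearMap = φ := rfl

noncomputable def map (m : 𝓜(ℂ, A)) : 𝓜(ℂ, B) where
  fst := φ.toContinuousLinearMap ∘L m.fst ∘L φ.symm.toContinuousLinearMap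
  snd := φ.toContinuousLinearMap ∘L m.snd ∘L φ.symm.toContinuousLinearMap
  central x y := by simpa using congrArg φ (m.central (φ.symm x) (φ.symm y))

@[simp] lemma map_fst (m : 𝓜(ℂ, A)) (b : B) : (map φ m).fst b = φ (m.fst (φ.symm b)) := rfl

@[simp] lemma map_snd (m : 𝓜(ℂ, A)) (b : B) : (map φ m).snd b = φ (m.snd (φ.symm b)) := rfl

noncomputable def congr : 𝓜(ℂ, A) ≃⋆ₐ[ℂ] 𝓜(ℂ, B) where
  toFun := map φ
  invFun := map φ.symm
  left_inv m := by ext <;> simp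
  right_inv m := by ext <;> simp
  map_mul' m n := by ext <;> simp
  map_add' m n := by ext <;> simp
  map_star' m := by ext <;> simp [star_fst, star_snd, map_star]
  map_smul' c m := by ext <;> simp

lemma congr_apply (m : 𝓜(ℂ, A)) : congr φ m = map φ m := rfl

lemma strictlyContinuous_congr : StrictlyContinuous (congr φ) :=
  strictlyContinuous_iff.2 fun b =>
    @Continuous.comp _ _ _ (strictTopology A) _ _ _ _
      ((map_continuous φ).prodMap (map_continuous φ)) (continuous_apply_strictTopology (φ.symm b))

theorem eq_congr_of_apply_coe (f : 𝓜(ℂ, A) →⋆ₐ[ℂ] 𝓜(ℂ, B)) (hf : ∀ a : A, f a = ↑(φ a))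
    (m : 𝓜(ℂ, A)) : f m = congr φ m := by
  have hfst (a : A) : ((f m).fst (φ a) : 𝓜(ℂ, B)) = ↑(φ (m.fst a)) := by
    rw [← mul_coe, ← hf, ← map_mul, mul_coe, hf]
  have hsnd (a : A) : ((f m).snd (φ a) : 𝓜(ℂ, B)) = ↑(φ (m.snd a)) := by
    rw [← coe_mul, ← hf, ← map_mul, coe_mul, hf]
  ext b : 3
  · simpa [congr_apply] using coe_injective (hfst (φ.symm b))
  · simpa [congr_apply] using coe_injective (hsnd (φ.symm b))

end

theorem exists_starAlgEquiv_of_conj_unitary (f : 𝓜(ℂ, A) →⋆ₐ[ℂ] 𝓜(ℂ, B))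
    (hf : StrictlyContinuous f) (g : 𝓜(ℂ, B) →⋆ₐ[ℂ] 𝓜(ℂ, A)) (hg : StrictlyContinuous g)
    (u : unitary 𝓜(ℂ, B)) (v : unitary 𝓜(ℂ, A))
    (hu : ∀ m, f (g m) = (u : 𝓜(ℂ, B)) * m * star (u : 𝓜(ℂ, B)))
    (hv : ∀ m, g (f m) = (v : 𝓜(ℂ, A)) * m * star (v : 𝓜(ℂ, A))) :
    ∃ φ : A ≃⋆ₐ[ℂ] B, ∀ a : A, f (a : 𝓜(ℂ, A)) = ↑(φ a) := by
  have hfA (a : A) : f a ∈ Set.range ((↑) : B → 𝓜(ℂ, B)) :=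
    apply_coe_mem_range_coe f g hg (fun b => hu b ▸ mul_coe_mul_mem_range_coe _ _ b) a
  have hgB (b : B) : g b ∈ Set.range ((↑) : A → 𝓜(ℂ, A)) :=
    apply_coe_mem_range_coe g f hf (fun a => hv a ▸ mul_coe_mul_mem_range_coe _ _ a) b
  obtain ⟨ψ, hψ⟩ := NonUnitalStarAlgHom.exists_lift_of_injective (coeHom (𝕜 := ℂ))
    coe_injective ((f : 𝓜(ℂ, A) →⋆ₙₐ[ℂ] 𝓜(ℂ, B)).comp coeHom) hfA
  simp only [coeHom_apply, NonUnitalStarAlgHom.comp_apply, NonUnitalStarAlgHom.coe_coe] at hψ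
  have hf_inj : Function.Injective f := by
    have hgf : ⇑g ∘ ⇑f = Unitary.conjStarAlgAut ℂ _ v := funext hv
    exact (hgf ▸ (Unitary.conjStarAlgAut ℂ _ v).injective).of_comp
  have hψ_surj : Function.Surjective ψ := by
    intro b
    obtain ⟨b', hb'⟩ := mul_coe_mul_mem_range_coe (star (u : 𝓜(ℂ, B))) u b
    obtain ⟨a, ha⟩ := hgB b'
    refine ⟨a, coe_injective ?_⟩
    rw [hψ, ha, hu, hb', ← mul_assoc, ← mul_assoc, Unitary.mul_star_self_of_mem u.prop, one_mul,
      mul_assoc, Unitary.mul_star_self_of_mem u.prop, mul_one]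
  exact ⟨.ofBijective ψ ⟨fun x y h => coe_injective (hf_inj (by rw [← hψ, ← hψ, h])), hψ_surj⟩,
    fun a => (hψ a).symm⟩

end DoubleCentralizer

open DoubleCentralizer

theorem statement8
    {A B : Type*} [NonUnitalCStarAlgebra A] [NonUnitalCStarAlgebra B]
    (f : 𝓜(ℂ, A) →⋆ₐ[ℂ] 𝓜(ℂ, B)) (hf : StrictlyContinuous f) :
    -- `f` is an equivalence in `𝔠*(2)` ...
    (∃ g : 𝓜(ℂ, B) →⋆ₐ[ℂ] 𝓜(ℂ, A), StrictlyContinuous ⇑g ∧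
      ∃ u : unitary 𝓜(ℂ, B), ∃ v : unitary 𝓜(ℂ, A),
        (∀ m : 𝓜(ℂ, B), f (g m) = (u : 𝓜(ℂ, B)) * m * star (u : 𝓜(ℂ, B))) ∧
        (∀ m : 𝓜(ℂ, A), g (f m) = (v : 𝓜(ℂ, A)) * m * star (v : 𝓜(ℂ, A))))
    -- ... if and only if `f` restricts to a C*-isomorphism `A ≅ B`:
    ↔ (∃ φ : A ≃⋆ₐ[ℂ] B, ∀ a : A, f (a : 𝓜(ℂ, A)) = ((φ a : B) : 𝓜(ℂ, B))) := by
  constructor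
  · rintro ⟨g, hg, u, v, hu, hv⟩
    exact exists_starAlgEquiv_of_conj_unitary f hf g hg u v hu hv
  · rintro ⟨φ, hφ⟩
    have hf_eq (m : 𝓜(ℂ, A)) : f m = congr φ m := eq_congr_of_apply_coe φ f hφ m
    refine ⟨(congr φ).symm, strictlyContinuous_congr φ.symm, 1, 1, fun m => ?_, fun m => ?_⟩ <;>
      simp [hf_eq]
end

section
/- Given a crossed module of groups (G, H, ∂ : H → G, c : G → Aut(H)), the associated structure with one object, arrows G, and bigons H ⋊ G — where (h, g) is a 2-morphism from g to ∂(h)g, horizontal composition is (h₁,g₁)·ₕ(h₂,g₂) = (h₁ c_{g₁}(h₂), g₁g₂), and vertical composition is (h', ∂(h)g)·ᵥ(h,g) = (h'h, g) — is a strict 2-group: both compositions are associative and unital, and the interchange law holds. -/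
/-! Horizontal composition is the multiplication of the semidirect product `H ⋊ G`, and vertical
composition only multiplies `H`-components, so both are associative and unital. For the
interchange law, the second Peiffer identity gives `c (d h * g) h' = h * c g h' * h⁻¹`, which is
exactly the conjugation needed to move `h₁` past `c g₁ h₂'`. -/

section HorizontalComposition

variable {G H : Type*} [Group G] [Group H] (c : G →* MulAut H)

def bigonHComp (p q : H × G) : H × G :=
  (p.1 * c p.2 q.1, p.2 * q.2)

theorem bigonHComp_assoc (p q r : H × G) :
    bigonHComp c (bigonHComp c p q) r = bigonHComp c p (bigonHComp c q r) := by
  simp [bigonHComp, mul_assoc]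

theorem bigonHComp_one_left (p : H × G) : bigonHComp c (1, 1) p = p := by
  simp [bigonHComp]

theorem bigonHComp_one_right (p : H × G) : bigonHComp c p (1, 1) = p := by
  simp [bigonHComp]

end HorizontalComposition

section VerticalComposition

variable {G H : Type*}

def bigonVComp [Mul H] (p q : H × G) : H × G :=
  (p.1 * q.1, q.2)

theorem bigonVComp_assoc [Semigroup H] (p q r : H × G) :
    bigonVComp (bigonVComp p q) r = bigonVComp p (bigonVComp q r) := by
  simp [bigonVComp, mul_assoc]

theorem bigonVComp_one_left [MulOneClass H] (g : G) (p : H × G) : bigonVComp (1, g) p = p := by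
  simp [bigonVComp]

theorem bigonVComp_one_right [MulOneClass H] (p : H × G) : bigonVComp p (1, p.2) = p := by
  simp [bigonVComp]

end VerticalComposition

theorem bigonHComp_bigonVComp_interchange {G H : Type*} [Group G] [Group H]
    {d : H →* G} {c : G →* MulAut H} (hpeiffer : ∀ h h' : H, c (d h) h' = h * h' * h⁻¹)
    (h₁ h₁' h₂ h₂' : H) (g₁ g₂ : G) :
    bigonHComp c (bigonVComp (h₁', d h₁ * g₁) (h₁, g₁)) (bigonVComp (h₂', d h₂ * g₂) (h₂, g₂))
      = bigonVComp (bigonHComp c (h₁', d h₁ * g₁) (h₂', d h₂ * g₂))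
          (bigonHComp c (h₁, g₁) (h₂, g₂)) := by
  have hconj : c (d h₁ * g₁) h₂' = h₁ * c g₁ h₂' * h₁⁻¹ := by
    rw [map_mul, MulAut.mul_apply, hpeiffer]
  simp only [bigonHComp, bigonVComp, Prod.mk.injEq, and_true]
  rw [hconj, map_mul]
  group

theorem statement10_general
    {G H : Type*} [Group G] [Group H]
    (d : H →* G) (c : G →* MulAut H)
    (hpeiffer₂ : ∀ h h' : H, c (d h) h' = h * h' * h⁻¹)
    -- horizontal and vertical composition of bigons:
    (hcomp : (H × G) → (H × G) → (H × G))
    (hhcomp : ∀ p q : H × G, hcomp p q = (p.1 * c p.2 q.1, p.2 * q.2))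
    (vcomp : (H × G) → (H × G) → (H × G))
    (hvcomp : ∀ p q : H × G, vcomp p q = (p.1 * q.1, q.2)) :
    -- sources and targets: `(h, g)` is a bigon `g ⇒ d(h)g`; the vertical
    -- composite of `(h', d(h)g) : d(h)g ⇒ d(h'h)g` with `(h, g) : g ⇒ d(h)g`
    -- is `(h'h, g) : g ⇒ d(h'h)g`:
    (∀ (h h' : H) (g : G), vcomp (h', d h * g) (h, g) = (h' * h, g)) ∧
    -- horizontal composition is associative and unital:
    (∀ p q r : H × G, hcomp (hcomp p q) r = hcomp p (hcomp q r)) ∧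
    (∀ p : H × G, hcomp (1, 1) p = p ∧ hcomp p (1, 1) = p) ∧
    -- vertical composition is associative and unital (units are the bigons
    -- `(1, g)`):
    (∀ p q r : H × G, vcomp (vcomp p q) r = vcomp p (vcomp q r)) ∧
    (∀ (h : H) (g : G), vcomp (1, d h * g) (h, g) = (h, g) ∧
      vcomp (h, g) (1, g) = (h, g)) ∧
    -- the interchange law:
    (∀ (h₁ h₁' h₂ h₂' : H) (g₁ g₂ : G),
      hcomp (vcomp (h₁', d h₁ * g₁) (h₁, g₁)) (vcomp (h₂', d h₂ * g₂) (h₂, g₂))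
        = vcomp (hcomp (h₁', d h₁ * g₁) (h₂', d h₂ * g₂))
            (hcomp (h₁, g₁) (h₂, g₂))) := by
  obtain rfl : hcomp = bigonHComp c := funext₂ hhcomp
  obtain rfl : vcomp = bigonVComp := funext₂ hvcomp
  exact ⟨fun _ _ _ => rfl, bigonHComp_assoc c,
    fun p => ⟨bigonHComp_one_left c p, bigonHComp_one_right c p⟩, bigonVComp_assoc,
    fun h g => ⟨bigonVComp_one_left _ (h, g), bigonVComp_one_right (h, g)⟩,
    bigonHComp_bigonVComp_interchange hpeiffer₂⟩

theorem statement10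
    {G H : Type*} [Group G] [Group H]
    (d : H →* G) (c : G →* MulAut H)
    (hpeiffer₁ : ∀ (g : G) (h : H), d (c g h) = g * d h * g⁻¹)
    (hpeiffer₂ : ∀ h h' : H, c (d h) h' = h * h' * h⁻¹)
    -- horizontal and vertical composition of bigons:
    (hcomp : (H × G) → (H × G) → (H × G))
    (hhcomp : ∀ p q : H × G, hcomp p q = (p.1 * c p.2 q.1, p.2 * q.2))
    (vcomp : (H × G) → (H × G) → (H × G))
    (hvcomp : ∀ p q : H × G, vcomp p q = (p.1 * q.1, q.2)) :
    -- sources and targets: `(h, g)` is a bigon `g ⇒ d(h)g`; the vertical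
    -- composite of `(h', d(h)g) : d(h)g ⇒ d(h'h)g` with `(h, g) : g ⇒ d(h)g`
    -- is `(h'h, g) : g ⇒ d(h'h)g`:
    (∀ (h h' : H) (g : G), vcomp (h', d h * g) (h, g) = (h' * h, g)) ∧
    -- horizontal composition is associative and unital:
    (∀ p q r : H × G, hcomp (hcomp p q) r = hcomp p (hcomp q r)) ∧
    (∀ p : H × G, hcomp (1, 1) p = p ∧ hcomp p (1, 1) = p) ∧
    -- vertical composition is associative and unital (units are the bigons
    -- `(1, g)`):
    (∀ p q r : H × G, vcomp (vcomp p q) r = vcomp p (vcomp q r)) ∧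
    (∀ (h : H) (g : G), vcomp (1, d h * g) (h, g) = (h, g) ∧
      vcomp (h, g) (1, g) = (h, g)) ∧
    -- the interchange law:
    (∀ (h₁ h₁' h₂ h₂' : H) (g₁ g₂ : G),
      hcomp (vcomp (h₁', d h₁ * g₁) (h₁, g₁)) (vcomp (h₂', d h₂ * g₂) (h₂, g₂))
        = vcomp (hcomp (h₁', d h₁ * g₁) (h₂', d h₂ * g₂))
            (hcomp (h₁, g₁) (h₂, g₂))) :=
  statement10_general d c hpeiffer₂ hcomp hhcomp vcomp hvcomp
end

section
/- Let (A_g)_{g∈G} be an upper semi-continuous Banach bundle over a locally compact group G equipped with continuous multiplication and involution satisfying all the algebraic axioms of a Fell bundle. Then the norm function a ↦ ‖a‖ is continuous on the total space; hence A is a continuous Fell bundle. -/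
theorem continuous_of_continuous_sq_of_nonneg {X : Type*} [TopologicalSpace X] {f : X → ℝ}
    (hf_nonneg : ∀ x, 0 ≤ f x) (hf_sq : Continuous fun x => f x ^ 2) : Continuous f := by
  have hf : f = fun x => Real.sqrt (f x ^ 2) := funext fun x => (Real.sqrt_sq (hf_nonneg x)).symm
  rw [hf]
  exact Real.continuous_sqrt.comp hf_sq

theorem statement17_general
    {G : Type*} [Group G]
    (𝒜 : Type*) [TopologicalSpace 𝒜]
    (p : 𝒜 → G)
    (nrm : 𝒜 → ℝ) (hnonneg : ∀ a : 𝒜, 0 ≤ nrm a)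
    -- multiplication and involution, continuous and covering the group
    -- multiplication and inversion:
    (mul : 𝒜 → 𝒜 → 𝒜) (hmul_cont : Continuous fun q : 𝒜 × 𝒜 => mul q.1 q.2)
    (hmul_p : ∀ a b : 𝒜, p (mul a b) = p a * p b)
    (star' : 𝒜 → 𝒜) (hstar_cont : Continuous star')
    (hstar_p : ∀ a : 𝒜, p (star' a) = (p a)⁻¹)
    -- the C*-identity `‖a‖² = ‖a*a‖`:
    (hCstar : ∀ a : 𝒜, nrm a ^ 2 = nrm (mul (star' a) a))
    -- the norm is continuous on the unit fibre (the C*-algebra `A₁`):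
    (hfibre : ContinuousOn nrm (p ⁻¹' {1})) :
    Continuous nrm := by
  have hstar_mul_mem : ∀ a, mul (star' a) a ∈ p ⁻¹' {1} := fun a => by
    simp [hmul_p, hstar_p]
  have hnorm_star_mul : Continuous fun a => nrm (mul (star' a) a) :=
    hfibre.comp_continuous (hmul_cont.comp (hstar_cont.prodMk continuous_id)) hstar_mul_mem
  refine continuous_of_continuous_sq_of_nonneg hnonneg ?_
  simpa only [hCstar] using hnorm_star_mul

theorem statement17
    {G : Type*} [Group G] [TopologicalSpace G] [IsTopologicalGroup G]
    [LocallyCompactSpace G]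
    (𝒜 : Type*) [TopologicalSpace 𝒜]
    (p : 𝒜 → G) (hp : Continuous p) (hpsurj : Function.Surjective p)
    (nrm : 𝒜 → ℝ) (hnonneg : ∀ a : 𝒜, 0 ≤ nrm a)
    -- upper semi-continuity of the norm (the bundle is u.s.c.):
    (husc : UpperSemicontinuous nrm)
    -- multiplication and involution, continuous and covering the group
    -- multiplication and inversion:
    (mul : 𝒜 → 𝒜 → 𝒜) (hmul_cont : Continuous fun q : 𝒜 × 𝒜 => mul q.1 q.2)
    (hmul_p : ∀ a b : 𝒜, p (mul a b) = p a * p b)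
    (star' : 𝒜 → 𝒜) (hstar_cont : Continuous star')
    (hstar_p : ∀ a : 𝒜, p (star' a) = (p a)⁻¹)
    -- the C*-identity `‖a‖² = ‖a*a‖`:
    (hCstar : ∀ a : 𝒜, nrm a ^ 2 = nrm (mul (star' a) a))
    -- the norm is continuous on the unit fibre (the C*-algebra `A₁`):
    (hfibre : ContinuousOn nrm (p ⁻¹' {1})) :
    Continuous nrm :=
  statement17_general 𝒜 p nrm hnonneg mul hmul_cont hmul_p star' hstar_cont hstar_p hCstar hfibre
end
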